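/- arXiv:1407.2723 — 5 statements merged into one kernel-verified Lean document; each statement's English description precedes it below -/
import Mathlib

section
/- Let f be a polynomial in three variables with real coefficients such that for all θ, x, y, z ∈ ℝ one has f(x, y·cos θ − z·sin θ, y·sin θ + z·cos θ) = f(x, y, z) (i.e., f is invariant under all rotations about the x-axis). Then there exists a polynomial P in two variables with real coefficients such that f(x, y, z) = P(x, y² + z²) for all (x, y, z) ∈ ℝ³. -/
/-!
Rotating `(y, z)` onto the half-axis `(√(y² + z²), 0)` shows `f(x, y, z) = f(x, √(y² + z²), 0)`,
so everything is determined by the profile `q(x, t) = f(x, t, 0)`. The rotation by `π` makes `q`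
even in `t`. Splitting any polynomial as `q(x, t) = A(x, t²) + t · B(x, t²)`, evenness kills the
odd part, and `P = A` works.
-/

open MvPolynomial

namespace MvPolynomial

variable {R σ : Type*}

theorem eval_bind₁ [CommSemiring R] {τ : Type*} (v : τ → R) (g : σ → MvPolynomial τ R)
    (f : MvPolynomial σ R) : eval v (bind₁ g f) = eval (fun i => eval v (g i)) f :=
  eval₂Hom_bind₁ _ _ _ _

variable [DecidableEq σ]

theorem exists_eval_eq_eval_sq_add_mul_eval_sq [CommSemiring R] (i : σ) (f : MvPolynomial σ R) :
    ∃ A B : MvPolynomial σ R, ∀ v : σ → R,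
      eval v f = eval (Function.update v i (v i ^ 2)) A +
        v i * eval (Function.update v i (v i ^ 2)) B := by
  induction f using MvPolynomial.induction_on with
  | C a => exact ⟨C a, 0, fun v => by simp⟩
  | add p q hp hq =>
    obtain ⟨A, B, hAB⟩ := hp
    obtain ⟨A', B', hAB'⟩ := hq
    exact ⟨A + A', B + B', fun v => by simp only [eval_add, hAB, hAB']; ring⟩
  | mul_X p j hp =>
    obtain ⟨A, B, hAB⟩ := hp
    by_cases hj : j = i
    · subst hj
      exact ⟨X j * B, A, fun v => by
        simp only [map_mul, hAB, eval_X, Function.update_self]; ring⟩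
    · exact ⟨A * X j, B * X j, fun v => by
        simp only [map_mul, hAB, eval_X, Function.update_of_ne hj]; ring⟩

theorem exists_eval_eq_eval_sq_of_eval_neg [CommRing R] [IsAddTorsionFree R] (i : σ)
    (f : MvPolynomial σ R)
    (hf : ∀ v : σ → R, eval (Function.update v i (-v i)) f = eval v f) :
    ∃ A : MvPolynomial σ R, ∀ v : σ → R, eval v f = eval (Function.update v i (v i ^ 2)) A := by
  obtain ⟨A, B, hAB⟩ := exists_eval_eq_eval_sq_add_mul_eval_sq i f
  refine ⟨A, fun v => ?_⟩
  have hodd : v i * eval (Function.update v i (v i ^ 2)) B = 0 := by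
    have h := hf v
    rw [hAB, hAB v] at h
    simp only [Function.update_idem, Function.update_self, neg_sq] at h
    rwa [add_right_inj, neg_mul, neg_eq_self] at h
  rw [hAB, hodd, add_zero]

end MvPolynomial

theorem exists_eq_sqrt_mul_cos_sin (y z : ℝ) :
    ∃ θ : ℝ, y = √(y ^ 2 + z ^ 2) * Real.cos θ ∧ z = √(y ^ 2 + z ^ 2) * Real.sin θ := by
  have hnorm : ‖(⟨y, z⟩ : ℂ)‖ = √(y ^ 2 + z ^ 2) := by
    rw [Complex.norm_def, Complex.normSq_mk]; ring_nf
  exact ⟨Complex.arg ⟨y, z⟩, by rw [← hnorm, Complex.norm_mul_cos_arg],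
    by rw [← hnorm, Complex.norm_mul_sin_arg]⟩

/-- A real polynomial in three variables invariant under all rotations
about the x-axis is of the form `P(x, y² + z²)` for some real polynomial `P` in two
variables. -/
theorem rotation_invariant_polynomial_is_sor
    (f : MvPolynomial (Fin 3) ℝ)
    (h : ∀ θ x y z : ℝ,
      MvPolynomial.eval
        ![x, y * Real.cos θ - z * Real.sin θ, y * Real.sin θ + z * Real.cos θ] f =
      MvPolynomial.eval ![x, y, z] f) :
    ∃ P : MvPolynomial (Fin 2) ℝ, ∀ x y z : ℝ,
      MvPolynomial.eval ![x, y, z] f = MvPolynomial.eval ![x, y ^ 2 + z ^ 2] P := by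
  set q : MvPolynomial (Fin 2) ℝ := bind₁ ![X 0, X 1, 0] f
  have hq (v : Fin 2 → ℝ) : eval v q = eval ![v 0, v 1, 0] f := by
    rw [eval_bind₁]
    exact congrArg (eval · f) (funext fun j => by fin_cases j <;> simp)
  have hq_even (v : Fin 2 → ℝ) : eval (Function.update v 1 (-v 1)) q = eval v q := by
    simpa [hq] using h Real.pi (v 0) (v 1) 0
  obtain ⟨P, hP⟩ := exists_eval_eq_eval_sq_of_eval_neg 1 q hq_even
  refine ⟨P, fun x y z => ?_⟩
  obtain ⟨θ, hy, hz⟩ := exists_eq_sqrt_mul_cos_sin y z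
  set r := √(y ^ 2 + z ^ 2)
  calc eval ![x, y, z] f
      = eval ![x, r, 0] f := by simpa [← hy, ← hz] using h θ x r 0
    _ = eval ![x, r] q := (hq ![x, r]).symm
    _ = eval ![x, r ^ 2] P := by
      rw [hP, show Function.update ![x, r] 1 (![x, r] 1 ^ 2) = ![x, r ^ 2] by
        ext j; fin_cases j <;> rfl]
    _ = eval ![x, y ^ 2 + z ^ 2] P := by rw [Real.sq_sqrt (by positivity)]
end

section
/- Let r̃, q̃, r̂, q̂, d be polynomials in one variable with real coefficients such that r̃·q̃ = r̂·q̂·d². Then for all x, y, z ∈ ℝ with d(x) ≠ 0 and q̃(x)·(y² + z²) = r̃(x), one has (q̃(x)·y/d(x))² + (q̃(x)·z/d(x))² = r̂(x)·q̂(x); that is, the map τ₂ : (x, y, z) ↦ (x, q̃(x)·y/d(x), q̃(x)·z/d(x)) maps the surface T′ : q̃(x)·(y² + z²) − r̃(x) = 0 into the tubular surface T : y² + z² − r̂(x)·q̂(x) = 0. -/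
open Polynomial

theorem sq_mul_div_add_sq_mul_div_eq {K : Type*} [Field K] {q r s d y z : K} (hd : d ≠ 0)
    (hT : q * (y ^ 2 + z ^ 2) = r) (hfac : r * q = s * d ^ 2) :
    (q * y / d) ^ 2 + (q * z / d) ^ 2 = s :=
  calc (q * y / d) ^ 2 + (q * z / d) ^ 2 = q * (y ^ 2 + z ^ 2) * q / d ^ 2 := by ring
    _ = s := by rw [hT, hfac, mul_div_cancel_right₀ s (pow_ne_zero 2 hd)]

/-- The map `τ₂ : (x,y,z) ↦ (x, q̃(x)·y/d(x), q̃(x)·z/d(x))` maps the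
surface `T' : q̃(x)·(y² + z²) - r̃(x) = 0` into the tubular surface
`T : y² + z² - r̂(x)·q̂(x) = 0`, provided `r̃·q̃ = r̂·q̂·d²`. -/
theorem tau2_maps_Tprime_into_tubular
    (rt qt rh qh d : Polynomial ℝ) (hfac : rt * qt = rh * qh * d ^ 2) :
    ∀ x y z : ℝ, d.eval x ≠ 0 → qt.eval x * (y ^ 2 + z ^ 2) = rt.eval x →
      (qt.eval x * y / d.eval x) ^ 2 + (qt.eval x * z / d.eval x) ^ 2 =
        rh.eval x * qh.eval x := by
  intro x y z hd hT
  refine sq_mul_div_add_sq_mul_div_eq hd hT ?_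
  simpa only [eval_mul, eval_pow] using congrArg (eval x) hfac
end

section
/- Let P : ℝ² → ℝ be a function, and let p̃, q̃, r̃, r̂, q̂, d be polynomials in one variable with real coefficients such that r̃·q̃ = r̂·q̂·d² and such that P(p̃(t)/q̃(t), r̃(t)/q̃(t)) = 0 for every t ∈ ℝ with q̃(t) ≠ 0. Then for all x, y, z ∈ ℝ with q̃(x) ≠ 0 and y² + z² = r̂(x)·q̂(x), one has P(p̃(x)/q̃(x), (d(x)·y/q̃(x))² + (d(x)·z/q̃(x))²) = 0; that is, the map τ : (x, y, z) ↦ (p̃(x)/q̃(x), d(x)·y/q̃(x), d(x)·z/q̃(x)) maps the tubular surface T : y² + z² − r̂(x)·q̂(x) = 0 into the surface of revolution X : P(x, y² + z²) = 0. -/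
open Polynomial

/-! On the tube over `x`, `(d y / q̃)² + (d z / q̃)² = d² r̂ q̂ / q̃² = r̃ q̃ / q̃² = r̃ / q̃`, so `τ`
sends the tube point over `x` to the point of the surface of revolution whose curve coordinates
are those of the parameterization of `P²` at `t = x`. -/

theorem mul_div_sq_add_mul_div_sq_eq_div {K : Type*} [Field K] {r q a b δ y z : K} (hq : q ≠ 0)
    (hfac : r * q = a * b * δ ^ 2) (hyz : y ^ 2 + z ^ 2 = a * b) :
    (δ * y / q) ^ 2 + (δ * z / q) ^ 2 = r / q := by
  field_simp
  linear_combination δ ^ 2 * hyz - hfac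

/-- The map `τ : (x,y,z) ↦ (p̃(x)/q̃(x), d(x)·y/q̃(x), d(x)·z/q̃(x))`
maps the tubular surface `T : y² + z² - r̂(x)·q̂(x) = 0` into the surface of
revolution `X : P(x, y² + z²) = 0`, where `(p̃/q̃, r̃/q̃)` parameterizes the curve
`P² : P(x, y) = 0` and `r̃·q̃ = r̂·q̂·d²`. -/
theorem tau_maps_tubular_into_sor
    (P : ℝ → ℝ → ℝ) (pt qt rt rh qh d : Polynomial ℝ)
    (hfac : rt * qt = rh * qh * d ^ 2)
    (hpar : ∀ t : ℝ, qt.eval t ≠ 0 → P (pt.eval t / qt.eval t) (rt.eval t / qt.eval t) = 0) :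
    ∀ x y z : ℝ, qt.eval x ≠ 0 → y ^ 2 + z ^ 2 = rh.eval x * qh.eval x →
      P (pt.eval x / qt.eval x)
        ((d.eval x * y / qt.eval x) ^ 2 + (d.eval x * z / qt.eval x) ^ 2) = 0 := by
  intro x y z hq hT
  have hfac_x : rt.eval x * qt.eval x = rh.eval x * qh.eval x * d.eval x ^ 2 := by
    simpa using congrArg (eval x) hfac
  rw [mul_div_sq_add_mul_div_sq_eq_div hq hfac_x hT]
  exact hpar x hq
end

section
/- Let g : ℝ → ℝ be a continuous function. The set T = {(x, y, z) ∈ ℝ³ : y² + z² = g(x)} is connected (nonempty and not separable into two disjoint nonempty relatively open subsets) if and only if the set {x ∈ ℝ : g(x) ≥ 0} is connected. -/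
open Set Real

/-!
The projection `(x, y, z) ↦ x` maps the tubular surface onto `{x | 0 ≤ g x}`, and conversely
the surface is the continuous image of `{x | 0 ≤ g x} × ℝ` under the polar parametrization
`(x, θ) ↦ (x, √(g x) cos θ, √(g x) sin θ)`. Both directions are then images of connected sets.
-/

theorem exists_sqrt_sq_add_sq_mul_cos_sin (y z : ℝ) :
    ∃ θ : ℝ, √(y ^ 2 + z ^ 2) * cos θ = y ∧ √(y ^ 2 + z ^ 2) * sin θ = z := by
  refine ⟨Complex.arg ⟨y, z⟩, ?_, ?_⟩
  · simpa [Complex.norm_eq_sqrt_sq_add_sq] using Complex.norm_mul_cos_arg ⟨y, z⟩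
  · simpa [Complex.norm_eq_sqrt_sq_add_sq] using Complex.norm_mul_sin_arg ⟨y, z⟩

theorem fst_image_tubular_eq (g : ℝ → ℝ) :
    Prod.fst '' {p : ℝ × ℝ × ℝ | p.2.1 ^ 2 + p.2.2 ^ 2 = g p.1} = {x | 0 ≤ g x} := by
  ext x
  constructor
  · rintro ⟨⟨x, y, z⟩, hp : y ^ 2 + z ^ 2 = g x, rfl⟩
    exact show 0 ≤ g x from hp ▸ add_nonneg (sq_nonneg y) (sq_nonneg z)
  · intro (hx : 0 ≤ g x)
    exact ⟨(x, √(g x), 0), by simp [sq_sqrt hx], rfl⟩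

theorem polar_image_eq_tubular (g : ℝ → ℝ) :
    (fun p : ℝ × ℝ => (p.1, √(g p.1) * cos p.2, √(g p.1) * sin p.2)) ''
        ({x | 0 ≤ g x} ×ˢ univ) = {p : ℝ × ℝ × ℝ | p.2.1 ^ 2 + p.2.2 ^ 2 = g p.1} := by
  ext p
  constructor
  · rintro ⟨⟨x, θ⟩, ⟨hx : 0 ≤ g x, -⟩, rfl⟩
    change (√(g x) * cos θ) ^ 2 + (√(g x) * sin θ) ^ 2 = g x
    rw [mul_pow, mul_pow, ← mul_add, cos_sq_add_sin_sq, mul_one, sq_sqrt hx]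
  · obtain ⟨x, y, z⟩ := p
    intro (hp : y ^ 2 + z ^ 2 = g x)
    obtain ⟨θ, hy, hz⟩ := exists_sqrt_sq_add_sq_mul_cos_sin y z
    rw [hp] at hy hz
    have hx : 0 ≤ g x := hp ▸ add_nonneg (sq_nonneg y) (sq_nonneg z)
    exact ⟨(x, θ), ⟨hx, trivial⟩, by simp [hy, hz]⟩

/-- For a continuous `g : ℝ → ℝ`, the tubular surface
`T = {(x,y,z) : y² + z² = g(x)}` is connected if and only if `{x : g(x) ≥ 0}` is
connected. -/
theorem tubular_connected_iff (g : ℝ → ℝ) (hg : Continuous g) :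
    IsConnected {p : ℝ × ℝ × ℝ | p.2.1 ^ 2 + p.2.2 ^ 2 = g p.1} ↔
      IsConnected {x : ℝ | 0 ≤ g x} := by
  constructor
  · intro hT
    rw [← fst_image_tubular_eq]
    exact hT.image _ continuous_fst.continuousOn
  · intro hS
    rw [← polar_image_eq_tubular]
    exact (hS.prod isConnected_univ).image _ (by fun_prop)
end

section
/- Let P be an irreducible polynomial in two variables x, w with real coefficients, and suppose the polynomial p(x, y) := P(x, y²) is reducible in ℝ[x, y]. Then there exist a nonzero constant c ∈ ℝ and an irreducible polynomial g ∈ ℝ[x, y] such that p(x, y) = c·g(x, y)·g(x, −y). -/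
/-!
The substitution `y ↦ y²` identifies `R[x, w]` with the subring of `R[x, y]` fixed by the
involution `τ : y ↦ -y`, because `τ` flips the sign of the coefficients of odd powers of `y`.
Hence a `τ`-fixed divisor of `p = P(x, y²)` is the image of a divisor of `P`, and irreducibility
of `P` forces it to be a unit or an associate of `p`. An irreducible factor `g` of `p` is
therefore not `τ`-fixed, and `g · τ g ∣ p`: either `τ g` is a prime not associated with `g`,
or `τ g = -g`, in which case `g` is an associate of `y` and `p` is divisible by `y²` by parity.
Since `g · τ g` is `τ`-fixed, `p` is an associate of it.
-/

open MvPolynomial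

namespace MvPolynomial

variable {σ R : Type*} [CommRing R]

lemma monomial_erase_mul_X_pow (i : σ) (m : σ →₀ ℕ) (a : R) (k : ℕ) :
    monomial (m.erase i) a * X i ^ k = monomial (m.update i k) a := by
  rw [← monomial_add_single, Finsupp.update_eq_erase_add_single]

variable [DecidableEq σ] (i : σ)

lemma update_two_mul_injective :
    Function.Injective fun m : σ →₀ ℕ => m.update i (2 * m i) := by
  intro m m' h
  have hi : m i = m' i := by simpa using congrArg (· i) h
  rw [← Finsupp.update_self m i, ← Finsupp.update_self m' i, ← hi]
  simpa using congrArg (·.update i (m i)) h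

lemma aeval_update_monomial (t : MvPolynomial σ R) (m : σ →₀ ℕ) (a : R) :
    aeval (Function.update X i t) (monomial m a) = monomial (m.erase i) a * t ^ m i := by
  conv_lhs => rw [← Finsupp.erase_add_single i m, monomial_add_single]
  rw [map_mul, map_pow, aeval_X, Function.update_self, aeval_monomial, monomial_eq,
    algebraMap_eq]
  congr 2
  refine Finsupp.prod_congr fun j hj => ?_
  rw [Function.update_of_ne (by rintro rfl; simp at hj)]

lemma aeval_update_neg_X_comp_self :
    (aeval (Function.update X i (-X i))).comp (aeval (Function.update X i (-X i))) =
      AlgHom.id R (MvPolynomial σ R) := by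
  refine algHom_ext fun j => ?_
  obtain rfl | hj := eq_or_ne j i <;> simp [Function.update_of_ne, *]

noncomputable def negateVar : MvPolynomial σ R ≃ₐ[R] MvPolynomial σ R :=
  AlgEquiv.ofAlgHom _ _ (aeval_update_neg_X_comp_self i) (aeval_update_neg_X_comp_self i)

noncomputable def squareVar : MvPolynomial σ R →ₐ[R] MvPolynomial σ R :=
  aeval (Function.update X i (X i ^ 2))

@[simp] lemma negateVar_negateVar (q : MvPolynomial σ R) : negateVar i (negateVar i q) = q :=
  (negateVar i).symm_apply_apply q

@[simp] lemma negateVar_C (c : R) : negateVar i (C c : MvPolynomial σ R) = C c := by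
  rw [← algebraMap_eq, AlgEquiv.commutes]

@[simp] lemma squareVar_C (c : R) : squareVar i (C c : MvPolynomial σ R) = C c := by
  rw [← algebraMap_eq, AlgHom.commutes]

lemma negateVar_monomial (m : σ →₀ ℕ) (a : R) :
    negateVar i (monomial m a) = monomial m ((-1) ^ m i * a) := by
  rw [negateVar, AlgEquiv.ofAlgHom_apply, aeval_update_monomial, neg_pow, mul_left_comm,
    monomial_erase_mul_X_pow]
  simp [← C_mul_monomial]

lemma squareVar_monomial (m : σ →₀ ℕ) (a : R) :
    squareVar i (monomial m a) = monomial (m.update i (2 * m i)) a := by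
  rw [squareVar, aeval_update_monomial, ← pow_mul, monomial_erase_mul_X_pow]

lemma coeff_negateVar (q : MvPolynomial σ R) (m : σ →₀ ℕ) :
    coeff m (negateVar i q) = (-1) ^ m i * coeff m q := by
  induction q using MvPolynomial.induction_on' with
  | monomial n a =>
    rw [negateVar_monomial, coeff_monomial, coeff_monomial]
    split_ifs with h
    · rw [h]
    · rw [mul_zero]
  | add q r hq hr => rw [map_add, coeff_add, coeff_add, hq, hr, mul_add]

lemma coeff_squareVar_update (P : MvPolynomial σ R) (m : σ →₀ ℕ) :
    coeff (m.update i (2 * m i)) (squareVar i P) = coeff m P := by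
  induction P using MvPolynomial.induction_on' with
  | monomial n a =>
    simp only [squareVar_monomial, coeff_monomial, (update_two_mul_injective i).eq_iff]
  | add P Q hP hQ => rw [map_add, coeff_add, coeff_add, hP, hQ]

lemma squareVar_injective : Function.Injective (squareVar (R := R) i) := fun P Q h => by
  ext m
  rw [← coeff_squareVar_update i P, h, coeff_squareVar_update]

lemma negateVar_squareVar (P : MvPolynomial σ R) :
    negateVar i (squareVar i P) = squareVar i P := by
  suffices h : (negateVar i).toAlgHom.comp (squareVar i) = squareVar i from
    DFunLike.congr_fun h P
  refine algHom_ext fun j => ?_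
  obtain rfl | hj := eq_or_ne j i <;> simp [negateVar, squareVar, Function.update_of_ne, *]

section IsAddTorsionFree

variable [IsAddTorsionFree R]

lemma exists_squareVar_eq_of_negateVar_eq {q : MvPolynomial σ R} (h : negateVar i q = q) :
    ∃ Q, squareVar i Q = q := by
  have heven : ∀ m ∈ q.support, Even (m i) := fun m hm => by
    by_contra hodd
    have : coeff m q = -coeff m q := by
      conv_lhs =>
        rw [← h, coeff_negateVar, (Nat.not_even_iff_odd.mp hodd).neg_one_pow, neg_one_mul]
    exact mem_support_iff.mp hm (self_eq_neg.mp this)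
  refine ⟨∑ m ∈ q.support, monomial (m.update i (m i / 2)) (coeff m q), ?_⟩
  conv_rhs => rw [q.as_sum]
  rw [map_sum]
  refine Finset.sum_congr rfl fun m hm => ?_
  rw [squareVar_monomial, Finsupp.update_idem, Finsupp.coe_update, Function.update_self,
    Nat.two_mul_div_two_of_even (heven m hm), Finsupp.update_self]

lemma X_dvd_of_negateVar_eq_neg {q : MvPolynomial σ R} (h : negateVar i q = -q) : X i ∣ q := by
  rw [X_dvd_iff_modMonomial_eq_zero]
  ext m
  by_cases hm : Finsupp.single i 1 ≤ m
  · rw [coeff_modMonomial_of_le _ hm, coeff_zero]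
  · have hmi : m i = 0 := by simpa [Finsupp.single_le_iff] using hm
    have hcoeff := coeff_negateVar i q m
    rw [h, hmi, pow_zero, one_mul, coeff_neg] at hcoeff
    rw [coeff_modMonomial_of_not_le _ hm, coeff_zero]
    exact neg_eq_self.mp hcoeff

end IsAddTorsionFree

variable [IsDomain R]

lemma not_isUnit_squareVar {P : MvPolynomial σ R} (hP : ¬IsUnit P) :
    ¬IsUnit (squareVar i P) := by
  rw [isUnit_iff_eq_C_of_isReduced] at hP ⊢
  rintro ⟨c, hc, hPc⟩
  exact hP ⟨c, hc, squareVar_injective i (by rw [hPc, squareVar_C])⟩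

lemma negateVar_eq_or_eq_neg_of_associated {g : MvPolynomial σ R} (hg : g ≠ 0)
    (h : Associated (negateVar i g) g) : negateVar i g = g ∨ negateVar i g = -g := by
  obtain ⟨u, hu⟩ := h.symm
  obtain ⟨c, -, hc⟩ := isUnit_iff_eq_C_of_isReduced.mp u.isUnit
  have hτg : negateVar i g = g * C c := by rw [← hu, hc]
  have hc2 : c * c = 1 := by
    have : g * C (c * c) = g * 1 := by
      conv_rhs => rw [← negateVar_negateVar i g, hτg, map_mul, hτg, negateVar_C]
      rw [C_mul]; ring
    exact C_injective σ R (by rw [mul_left_cancel₀ hg this, C_1])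
  rcases mul_self_eq_one_iff.mp hc2 with rfl | rfl
  · left; rw [hτg, C_1, mul_one]
  · right; rw [hτg, C_neg, C_1, mul_neg_one]

variable [IsAddTorsionFree R]

lemma dvd_of_negateVar_eq_neg {g h : MvPolynomial σ R} (hg : Irreducible g)
    (hτg : negateVar i g = -g) (hτh : negateVar i h = -h) : g ∣ h :=
  (X_prime.irreducible.associated_of_dvd hg (X_dvd_of_negateVar_eq_neg i hτg)).symm.dvd.trans
    (X_dvd_of_negateVar_eq_neg i hτh)

lemma associated_of_dvd_squareVar {P d : MvPolynomial σ R} (hP : Irreducible P)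
    (hd : d ∣ squareVar i P) (hτd : negateVar i d = d) (hdu : ¬IsUnit d) :
    Associated d (squareVar i P) := by
  obtain ⟨e, he⟩ := hd
  have hd0 : d ≠ 0 := by
    rintro rfl
    exact hP.ne_zero (squareVar_injective i (by rw [he, zero_mul, map_zero]))
  have hτe : negateVar i e = e := mul_left_cancel₀ hd0 <| by
    rw [← he, ← negateVar_squareVar, he, map_mul, hτd]
  obtain ⟨D, rfl⟩ := exists_squareVar_eq_of_negateVar_eq i hτd
  obtain ⟨E, rfl⟩ := exists_squareVar_eq_of_negateVar_eq i hτe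
  rw [← map_mul] at he
  rcases hP.isUnit_or_isUnit (squareVar_injective i he) with hD | hE
  · exact absurd (hD.map _) hdu
  · rw [he, map_mul]
    exact associated_mul_unit_right _ _ (hE.map _)

variable [UniqueFactorizationMonoid R]

lemma mul_negateVar_dvd {g p : MvPolynomial σ R} (hg : Irreducible g) (hgp : g ∣ p)
    (hp : negateVar i p = p) (hne : negateVar i g ≠ g) : g * negateVar i g ∣ p := by
  obtain ⟨h, rfl⟩ := hgp
  by_cases hass : Associated (negateVar i g) g
  · have hτg := (negateVar_eq_or_eq_neg_of_associated i hg.ne_zero hass).resolve_left hne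
    have hτh : negateVar i h = -h := mul_left_cancel₀ hg.ne_zero <| by
      rw [map_mul, hτg] at hp
      linear_combination -hp
    rw [hτg, mul_neg, neg_dvd]
    exact mul_dvd_mul_left g (dvd_of_negateVar_eq_neg i hg hτg hτh)
  · have hτg : Irreducible (negateVar i g) := hg.map (negateVar i)
    have hdvd : negateVar i g ∣ g * h := ⟨negateVar i h, by rw [← map_mul, hp]⟩
    rcases hτg.prime.dvd_or_dvd hdvd with hdvd | hdvd
    · exact absurd (hτg.associated_of_dvd hg hdvd) hass
    · exact mul_dvd_mul_left g hdvd

theorem exists_squareVar_eq_C_mul_mul_negateVar {P : MvPolynomial σ R} (hP : Irreducible P)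
    (hred : ¬Irreducible (squareVar i P)) :
    ∃ c : R, IsUnit c ∧ ∃ g, Irreducible g ∧ squareVar i P = C c * g * negateVar i g := by
  obtain ⟨g, hg, hgp⟩ := WfDvdMonoid.exists_irreducible_factor
    (not_isUnit_squareVar i hP.not_isUnit)
    ((map_ne_zero_iff _ (squareVar_injective i)).mpr hP.ne_zero)
  by_cases hfix : negateVar i g = g
  · exact absurd ((associated_of_dvd_squareVar i hP hgp hfix hg.not_isUnit).irreducible hg) hred
  obtain ⟨u, hu⟩ := associated_of_dvd_squareVar i hP
    (mul_negateVar_dvd i hg hgp (negateVar_squareVar i P) hfix)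
    (by rw [map_mul, negateVar_negateVar, mul_comm])
    (fun h => hg.not_isUnit (isUnit_of_mul_isUnit_left h))
  obtain ⟨c, hc, hcu⟩ := isUnit_iff_eq_C_of_isReduced.mp u.isUnit
  exact ⟨c, hc, g, hg, by rw [← hu, hcu]; ring⟩

end MvPolynomial

/-- If `P(x, w)` is irreducible over ℝ but `p(x, y) := P(x, y²)` is
reducible, then `p(x, y) = c·g(x, y)·g(x, -y)` for some nonzero constant `c` and
some irreducible polynomial `g`. -/
theorem reducible_profile_splits_symmetrically
    (P : MvPolynomial (Fin 2) ℝ) (hP : Irreducible P)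
    (p : MvPolynomial (Fin 2) ℝ)
    (hp : p = MvPolynomial.aeval ![MvPolynomial.X 0, (MvPolynomial.X 1) ^ 2] P)
    (hred : ¬ Irreducible p) :
    ∃ c : ℝ, c ≠ 0 ∧ ∃ g : MvPolynomial (Fin 2) ℝ, Irreducible g ∧
      p = MvPolynomial.C c * g *
        MvPolynomial.aeval ![MvPolynomial.X 0, -MvPolynomial.X 1] g := by
  have hsq : ![X 0, X 1 ^ 2] = Function.update X 1 (X 1 ^ 2 : MvPolynomial (Fin 2) ℝ) := by
    ext j : 1; fin_cases j <;> rfl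
  have hneg : ![X 0, -X 1] = Function.update X 1 (-X 1 : MvPolynomial (Fin 2) ℝ) := by
    ext j : 1; fin_cases j <;> rfl
  rw [hsq] at hp
  subst hp
  obtain ⟨c, hc, g, hg, h⟩ := exists_squareVar_eq_C_mul_mul_negateVar 1 hP hred
  exact ⟨c, hc.ne_zero, g, hg, by rw [hneg]; exact h⟩
end
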